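/- Let α ∈ (0,1). Then the integral ∫_{{z ∈ ℝ² : z₁ > 0}} z₁^{−1/2} |(1−z₁, z₂)|^{−(1+α)} |(1+z₁, z₂)|^{−1} dz is finite. -/

import Mathlib

/-!
Write `z = (x, y)`. From `a² + b² ≥ 2|a||b|`, `|(1-x, y)|^{-(1+α)} ≤ |x-1|^{-s} |y|^{-s}` with
`s = (1+α)/2`, and for `x > 0` also `|(1+x, y)|^{-1} ≤ √2 |y-1|^{-1/2}`. So the integrand is dominated
by `√2 w_{1/2,s}(x) w_{s,1/2}(y)`, where `w_{p,q}(t) = |t|^{-p} |t-1|^{-q}` is integrable on `ℝ`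
whenever `0 ≤ p, q < 1` (integrable singularities) and `p + q > 1` (decay at infinity); both pairs
qualify because `0 < α < 1`.
-/

noncomputable section

open MeasureTheory Real Set ENNReal NNReal

/-- Points of the plane `ℝ²`. -/
abbrev Pt : Type := EuclideanSpace ℝ (Fin 2)

/-- The point `(a, b) ∈ ℝ²`. -/
def mk2 (a b : ℝ) : Pt := (WithLp.equiv 2 (Fin 2 → ℝ)).symm ![a, b]

/-- The (open) right half-plane `ℝ²₊ = {x : x₁ > 0}`. -/
def halfPlane : Set Pt := {x | 0 < x 0}

/-- The closed right half-plane `{x : x₁ ≥ 0}`. -/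
def closedHalfPlane : Set Pt := {x | 0 ≤ x 0}

/-- Reflection `ỹ = (−y₁, y₂)` across the boundary of the half-plane. -/
def reflect (y : Pt) : Pt := mk2 (-(y 0)) (y 1)

/-- Rotation by 90 degrees: `(a₁,a₂)⊥ = (−a₂,a₁)`. -/
def perp (a : Pt) : Pt := mk2 (-(a 1)) (a 0)

/-- The α-SQG Biot–Savart kernel on the half-plane:
`(x−y)⊥/|x−y|^{2+α} − (x−ỹ)⊥/|x−ỹ|^{2+α}`. -/
def sqgKernel (α : ℝ) (x y : Pt) : Pt :=
  (‖x - y‖ ^ (2 + α))⁻¹ • perp (x - y) - (‖x - reflect y‖ ^ (2 + α))⁻¹ • perp (x - reflect y)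

/-- The velocity `u = -∇⊥(-Δ)^{-1+α/2} θ` on the half-plane, via the Biot–Savart law. -/
def biotSavart (α : ℝ) (θ : Pt → ℝ) (x : Pt) : Pt :=
  ∫ y in halfPlane, θ y • sqgKernel α x y

/-- The partial derivative `∂ᵢ f` (with junk value `0` where `f` is not differentiable). -/
def pd (i : Fin 2) (f : Pt → ℝ) (x : Pt) : ℝ :=
  fderiv ℝ f x (EuclideanSpace.single i 1)

theorem MeasureTheory.LocallyIntegrable.comp_sub_right {G E : Type*} [AddGroup G]
    [TopologicalSpace G] [IsTopologicalAddGroup G] [MeasurableSpace G] [BorelSpace G]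
    [NormedAddCommGroup E] {μ : Measure G} [μ.IsAddRightInvariant] {f : G → E}
    (hf : LocallyIntegrable f μ) (c : G) : LocallyIntegrable (fun t => f (t - c)) μ := by
  rw [← map_sub_right_eq_self μ c] at hf
  exact (locallyIntegrable_map_homeomorph (Homeomorph.subRight c)).mp hf

theorem MeasureTheory.IntegrableOn.comp_euclideanSpace_fin_two {E : Type*} [NormedAddCommGroup E]
    {f : ℝ × ℝ → E} {s : Set (ℝ × ℝ)} (hf : IntegrableOn f s) :
    IntegrableOn (fun z : EuclideanSpace ℝ (Fin 2) => f (z 0, z 1)) {z | (z 0, z 1) ∈ s} :=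
  (((volume_preserving_finTwoArrow ℝ).comp
    (EuclideanSpace.volume_preserving_symm_measurableEquiv_toLp (Fin 2))).integrableOn_comp_preimage
    ((MeasurableEquiv.toLp 2 (Fin 2 → ℝ)).symm.trans
      MeasurableEquiv.finTwoArrow).measurableEmbedding).mpr hf

def twoPointWeight (p q t : ℝ) : ℝ := |t| ^ (-p) * |t - 1| ^ (-q)

section TwoPointWeight

variable {p q : ℝ}

lemma measurable_twoPointWeight : Measurable (twoPointWeight p q) := by
  unfold twoPointWeight
  fun_prop

lemma twoPointWeight_nonneg (t : ℝ) : 0 ≤ twoPointWeight p q t := by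
  unfold twoPointWeight
  positivity

lemma locallyIntegrable_abs_rpow_neg (hp : p < 1) :
    LocallyIntegrable (fun t : ℝ => |t| ^ (-p)) :=
  locallyIntegrable_of_norm_le_rpow (by simp) (by simpa using hp)
    (ae_of_all _ fun t => by
      rw [one_mul, Real.norm_eq_abs, abs_of_nonneg (by positivity), Real.norm_eq_abs])
    (by fun_prop : Measurable fun t : ℝ => |t| ^ (-p)).aestronglyMeasurable

lemma twoPointWeight_le (hp : 0 ≤ p) (hq : 0 ≤ q) (t : ℝ) :
    twoPointWeight p q t ≤ 2 ^ q * |t| ^ (-p) + 2 ^ p * |t - 1| ^ (-q) := by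
  have two_inv_rpow_neg {r : ℝ} : (2⁻¹ : ℝ) ^ (-r) = 2 ^ r := by
    rw [Real.inv_rpow zero_le_two, Real.rpow_neg zero_le_two, inv_inv]
  have := Real.rpow_nonneg zero_le_two p
  have := Real.rpow_nonneg zero_le_two q
  have : 0 ≤ |t| ^ (-p) := by positivity
  have : 0 ≤ |t - 1| ^ (-q) := by positivity
  unfold twoPointWeight
  rcases le_total 2⁻¹ |t| with ht | ht
  · have : |t| ^ (-p) ≤ 2 ^ p :=
      two_inv_rpow_neg ▸ Real.rpow_le_rpow_of_nonpos (by norm_num) ht (neg_nonpos.2 hp)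
    nlinarith
  · have ht' : 2⁻¹ ≤ |t - 1| := by
      have := abs_sub_abs_le_abs_sub 1 t
      rw [abs_one, abs_sub_comm] at this
      linarith
    have : |t - 1| ^ (-q) ≤ 2 ^ q :=
      two_inv_rpow_neg ▸ Real.rpow_le_rpow_of_nonpos (by norm_num) ht' (neg_nonpos.2 hq)
    nlinarith

lemma twoPointWeight_le_of_two_le (hp : 0 ≤ p) (hq : 0 ≤ q) {t : ℝ} (ht : 2 ≤ |t|) :
    twoPointWeight p q t ≤ 3 ^ (p + q) * (1 + |t|) ^ (-(p + q)) := by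
  have hu : 0 < (1 + |t|) / 3 := by positivity
  have hut : (1 + |t|) / 3 ≤ |t - 1| := by
    have := abs_sub_abs_le_abs_sub t 1
    rw [abs_one] at this
    linarith
  calc twoPointWeight p q t ≤ ((1 + |t|) / 3) ^ (-p) * ((1 + |t|) / 3) ^ (-q) :=
        mul_le_mul (Real.rpow_le_rpow_of_nonpos hu (by linarith) (neg_nonpos.2 hp))
          (Real.rpow_le_rpow_of_nonpos hu hut (neg_nonpos.2 hq)) (by positivity) (by positivity)
    _ = 3 ^ (p + q) * (1 + |t|) ^ (-(p + q)) := by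
        rw [← Real.rpow_add hu, ← neg_add, Real.div_rpow (by positivity) (by norm_num),
          Real.rpow_neg (by norm_num : (0 : ℝ) ≤ 3), div_inv_eq_mul, mul_comm]

theorem integrable_twoPointWeight (hp0 : 0 ≤ p) (hp1 : p < 1) (hq0 : 0 ≤ q) (hq1 : q < 1)
    (hpq : 1 < p + q) : Integrable (twoPointWeight p q) := by
  have hloc : LocallyIntegrable (twoPointWeight p q) := by
    refine (((locallyIntegrable_abs_rpow_neg hp1).smul (2 ^ q : ℝ)).add
      (((locallyIntegrable_abs_rpow_neg hq1).comp_sub_right 1).smul (2 ^ p : ℝ))).mono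
      measurable_twoPointWeight.aestronglyMeasurable (ae_of_all _ fun t => ?_)
    rw [Real.norm_of_nonneg (twoPointWeight_nonneg t), Pi.add_apply, Pi.smul_apply,
      Pi.smul_apply, smul_eq_mul, smul_eq_mul, Real.norm_of_nonneg (by positivity)]
    exact twoPointWeight_le hp0 hq0 t
  refine hloc.integrable_of_isBigO_cocompact (g := fun t => (1 + ‖t‖) ^ (-(p + q)))
    (Asymptotics.IsBigO.of_bound (3 ^ (p + q)) ?_)
    ((integrable_one_add_norm (by simpa using hpq)).integrableAtFilter _)
  filter_upwards [tendsto_norm_cocompact_atTop.eventually_ge_atTop 2] with t ht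
  rw [Real.norm_of_nonneg (twoPointWeight_nonneg t), Real.norm_of_nonneg (by positivity)]
  exact twoPointWeight_le_of_two_le hp0 hq0 ht

end TwoPointWeight

lemma norm_mk2 (a b : ℝ) : ‖mk2 a b‖ = √(a ^ 2 + b ^ 2) := by
  simp [mk2, EuclideanSpace.norm_eq, Fin.sum_univ_two]

lemma norm_mk2_sq (a b : ℝ) : ‖mk2 a b‖ ^ 2 = a ^ 2 + b ^ 2 := by
  rw [norm_mk2, Real.sq_sqrt (by positivity)]

lemma inv_norm_mk2_rpow_le {a b r : ℝ} (ha : a ≠ 0) (hb : b ≠ 0) (hr : 0 ≤ r) :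
    (‖mk2 a b‖ ^ r)⁻¹ ≤ |a| ^ (-(r / 2)) * |b| ^ (-(r / 2)) := by
  have hab : 0 < |a| * |b| := by positivity
  have hle : |a| * |b| ≤ ‖mk2 a b‖ ^ 2 := by
    rw [norm_mk2_sq]
    nlinarith [sq_abs a, sq_abs b, sq_nonneg (|a| - |b|)]
  calc (‖mk2 a b‖ ^ r)⁻¹ = ((‖mk2 a b‖ ^ 2) ^ (r / 2))⁻¹ := by
        rw [← Real.rpow_natCast, ← Real.rpow_mul (norm_nonneg _)]
        ring_nf
    _ ≤ ((|a| * |b|) ^ (r / 2))⁻¹ :=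
        inv_anti₀ (by positivity) (Real.rpow_le_rpow hab.le hle (by linarith))
    _ = |a| ^ (-(r / 2)) * |b| ^ (-(r / 2)) := by
        rw [← Real.rpow_neg hab.le, Real.mul_rpow (abs_nonneg a) (abs_nonneg b)]

lemma inv_norm_mk2_le_of_one_le {a b : ℝ} (ha : 1 ≤ a) (hb : b ≠ 1) :
    ‖mk2 a b‖⁻¹ ≤ √2 * |b - 1| ^ (-(1 / 2 : ℝ)) := by
  have hb' : 0 < |b - 1| := abs_pos.2 (sub_ne_zero.2 hb)
  have hle : |b - 1| / 2 ≤ ‖mk2 a b‖ ^ 2 := by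
    have : |b - 1| ≤ |b| + 1 := by simpa using abs_sub b 1
    rw [norm_mk2_sq]
    nlinarith [sq_abs b, sq_nonneg (|b| - 1)]
  calc ‖mk2 a b‖⁻¹ ≤ (√(|b - 1| / 2))⁻¹ :=
        inv_anti₀ (by positivity) (Real.sqrt_le_iff.2 ⟨norm_nonneg _, hle⟩)
    _ = √2 * |b - 1| ^ (-(1 / 2 : ℝ)) := by
        rw [Real.sqrt_div hb'.le, inv_div, Real.sqrt_eq_rpow |b - 1|, Real.rpow_neg hb'.le,
          div_eq_mul_inv]

def modelIntegrand (α x y : ℝ) : ℝ :=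
  (√x)⁻¹ * (‖mk2 (1 - x) y‖ ^ (1 + α))⁻¹ * ‖mk2 (1 + x) y‖⁻¹

lemma measurable_modelIntegrand (α : ℝ) :
    Measurable (fun z : ℝ × ℝ => modelIntegrand α z.1 z.2) := by
  simp only [modelIntegrand, norm_mk2]
  fun_prop

lemma modelIntegrand_nonneg (α x y : ℝ) : 0 ≤ modelIntegrand α x y := by
  unfold modelIntegrand
  positivity

lemma modelIntegrand_le {α x y : ℝ} (hα : 0 ≤ 1 + α) (hx0 : 0 < x) (hx1 : x ≠ 1)
    (hy0 : y ≠ 0) (hy1 : y ≠ 1) :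
    modelIntegrand α x y
      ≤ √2 * (twoPointWeight (1 / 2) ((1 + α) / 2) x * twoPointWeight ((1 + α) / 2) (1 / 2) y) := by
  have hsqrt : (√x)⁻¹ = |x| ^ (-(1 / 2 : ℝ)) := by
    rw [abs_of_pos hx0, Real.sqrt_eq_rpow, Real.rpow_neg hx0.le]
  have hmid := inv_norm_mk2_rpow_le (sub_ne_zero.2 hx1.symm) hy0 hα
  rw [abs_sub_comm] at hmid
  have hlast := inv_norm_mk2_le_of_one_le (by linarith : 1 ≤ 1 + x) hy1
  calc modelIntegrand α x y
      ≤ |x| ^ (-(1 / 2 : ℝ)) * (|x - 1| ^ (-((1 + α) / 2)) * |y| ^ (-((1 + α) / 2)))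
          * (√2 * |y - 1| ^ (-(1 / 2 : ℝ))) := by
        unfold modelIntegrand
        rw [hsqrt]
        gcongr
    _ = _ := by
        unfold twoPointWeight
        ring

lemma integrableOn_modelIntegrand {α : ℝ} (hα0 : 0 < α) (hα1 : α < 1) :
    IntegrableOn (fun z : ℝ × ℝ => modelIntegrand α z.1 z.2) {z | 0 < z.1} := by
  have hmajorant : Integrable (fun z : ℝ × ℝ =>
      √2 * (twoPointWeight (1 / 2) ((1 + α) / 2) z.1 * twoPointWeight ((1 + α) / 2) (1 / 2) z.2)) :=
    ((integrable_twoPointWeight (by norm_num) (by norm_num) (by linarith) (by linarith)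
      (by linarith)).mul_prod (integrable_twoPointWeight (by linarith) (by linarith)
        (by norm_num) (by norm_num) (by linarith))).const_mul _
  have hfst_ne (a : ℝ) : ∀ᵐ z : ℝ × ℝ, z.1 ≠ a :=
    Measure.quasiMeasurePreserving_fst.ae (Measure.ae_ne volume a)
  have hsnd_ne (a : ℝ) : ∀ᵐ z : ℝ × ℝ, z.2 ≠ a :=
    Measure.quasiMeasurePreserving_snd.ae (Measure.ae_ne volume a)
  refine hmajorant.integrableOn.mono' (measurable_modelIntegrand α).aestronglyMeasurable.restrict ?_
  filter_upwards [ae_restrict_mem (measurableSet_lt measurable_const measurable_fst),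
    ae_restrict_of_ae (hfst_ne 1), ae_restrict_of_ae (hsnd_ne 0), ae_restrict_of_ae (hsnd_ne 1)]
    with z hx0 hx1 hy0 hy1
  rw [Real.norm_of_nonneg (modelIntegrand_nonneg α _ _)]
  exact modelIntegrand_le (by linarith) hx0 hx1 hy0 hy1

/-- **Finiteness of the weighted `L²` model integral** (used in Lemma 2.3):
`∫_{z₁ > 0} z₁^{−1/2} |(1−z₁,z₂)|^{−(1+α)} |(1+z₁,z₂)|^{−1} dz < ∞`. -/
theorem weighted_L2_model_integral_finite (α : ℝ) (hα0 : 0 < α) (hα1 : α < 1) :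
    IntegrableOn
      (fun z : Pt =>
        (Real.sqrt (z 0))⁻¹ * (‖mk2 (1 - z 0) (z 1)‖ ^ (1 + α))⁻¹
          * ‖mk2 (1 + z 0) (z 1)‖⁻¹)
      {z : Pt | 0 < z 0} volume :=
  (integrableOn_modelIntegrand hα0 hα1).comp_euclideanSpace_fin_two
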